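/- Let μ ∈ {0,1}. Then 𝒜⁺_μ = 𝒦⁺_μ and 𝒜⁻_μ = 𝒦⁻_μ, i.e. for every φ ∈ H¹(ℝ²)∖{0} with S_μ(φ) < S_μ(Q_μ), one has P_μ(φ) > 0 if and only if I_μ(φ) > 0 (and P_μ(φ) < 0 if and only if I_μ(φ) < 0). -/

import Mathlib

open MeasureTheory Real Filter
open scoped Topology ENNReal

noncomputable section

abbrev E2 : Type := EuclideanSpace ℝ (Fin 2)

/-- Squared `L²` norm. -/
def l2Sq (u : E2 → ℂ) : ℝ := ∫ x : E2, ‖u x‖ ^ 2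

/-- Squared `L²` norm of the gradient. -/
def gradSq (u : E2 → ℂ) : ℝ := ∫ x : E2, ‖fderiv ℝ u x‖ ^ 2

/-- Membership in `H¹(ℝ²)`. -/
def MemH1 (u : E2 → ℂ) : Prop :=
  MemLp u 2 volume ∧ Differentiable ℝ u ∧ MemLp (fun x => fderiv ℝ u x) 2 volume

/-- Integrability of all exponentials `e^{a|u|²} - 1`. -/
def ExpIntegrable (u : E2 → ℂ) : Prop :=
  ∀ a : ℝ, 0 < a → Integrable (fun x : E2 => Real.exp (a * ‖u x‖ ^ 2) - 1)

/-- The nonlinearity `f_μ`. -/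
def fmu (μ : ℝ) (z : ℂ) : ℂ :=
  ((Real.exp (4 * π * ‖z‖ ^ 2) - 1 - 4 * π * μ * ‖z‖ ^ 2 : ℝ) : ℂ) * z

/-- The potential `F_μ`. -/
def Fmu (μ : ℝ) (z : ℂ) : ℝ :=
  (Real.exp (4 * π * ‖z‖ ^ 2) - 1 - 4 * π * ‖z‖ ^ 2 - 8 * π ^ 2 * μ * ‖z‖ ^ 4) / (8 * π)

/-- `Re (z̄ f_μ(z))`. -/
def nlDensity (μ : ℝ) (z : ℂ) : ℝ :=
  (Real.exp (4 * π * ‖z‖ ^ 2) - 1 - 4 * π * μ * ‖z‖ ^ 2) * ‖z‖ ^ 2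

/-- Energy. -/
def Emu (μ : ℝ) (u : E2 → ℂ) : ℝ := gradSq u / 2 - ∫ x : E2, Fmu μ (u x)

/-- Action. -/
def Smu (μ : ℝ) (u : E2 → ℂ) : ℝ := Emu μ u + l2Sq u / 2

/-- The functional `P_μ`. -/
def Pmu (μ : ℝ) (u : E2 → ℂ) : ℝ := l2Sq u / 2 - ∫ x : E2, Fmu μ (u x)

/-- The virial functional `I_μ`. -/
def Imu (μ : ℝ) (u : E2 → ℂ) : ℝ :=
  gradSq u - ∫ x : E2, (nlDensity μ (u x) - 2 * Fmu μ (u x))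

/-- Laplacian on `ℝ²` (sum of second directional derivatives). -/
def lap (v : E2 → ℂ) (x : E2) : ℂ :=
  ∑ i : Fin 2, fderiv ℝ (fun y => fderiv ℝ v y (EuclideanSpace.single i 1)) x
      (EuclideanSpace.single i 1)

/-- `φ` is a (pointwise) solution to the elliptic equation `-Δφ + φ = f_μ(φ)`. -/
def IsEllipticSolution (μ : ℝ) (φ : E2 → ℂ) : Prop :=
  ∀ x, -lap φ x + φ x = fmu μ (φ x)

/-- Ground state for `-ΔQ + Q = f_μ(Q)`. -/
structure IsGroundState (μ : ℝ) (Q : E2 → ℂ) : Prop where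
  mem : MemH1 Q
  expint : ExpIntegrable Q
  nonzero : ¬ Q =ᵐ[volume] (0 : E2 → ℂ)
  radial : ∀ x y : E2, ‖x‖ = ‖y‖ → Q x = Q y
  solves : IsEllipticSolution μ Q
  minimal : ∀ φ : E2 → ℂ, MemH1 φ → ExpIntegrable φ → ¬ φ =ᵐ[volume] (0 : E2 → ℂ) →
    IsEllipticSolution μ φ → Smu μ Q ≤ Smu μ φ
  grad_pos : 0 < gradSq Q
  grad_lt_one : gradSq Q < 1

/-! Write `S_μ = ‖∇φ‖²/2 + P_μ` and `I_μ = ‖∇φ‖² - ∫ G_μ(φ)` with `G_μ = Re(z̄ f_μ) - 2F_μ ≥ 2F_μ ≥ 0`.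
The dilation `φ(R ·)` keeps `‖∇φ‖²` and multiplies `P_μ` and `∫ G_μ(φ)` by `R⁻²`; when `∫ G_μ(φ) > 0`
it therefore reaches `I_μ = 0` with action `‖∇φ‖²/2 + (‖∇φ‖² / ∫ G_μ(φ)) P_μ(φ)`. Below the ground
state level neither `P_μ` nor `I_μ` vanishes, and if they had opposite signs this action would lie
below `S_μ(φ) < S_μ(Q)`, contradicting the `I_μ`-characterization of `S_μ(Q)`. In the degenerate case
`∇φ = 0` the scaling `c φ` reaches `P_μ = 0` at zero action (`F_μ` is superquadratic), contradicting the
`P_μ`-characterization since `S_μ(Q) > 0`. -/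

namespace Real

lemma nonneg_of_hasDerivAt_of_nonneg {f f' : ℝ → ℝ} (h₀ : f 0 = 0)
    (hf : ∀ s, HasDerivAt f (f' s) s) (hf' : ∀ s, 0 ≤ s → 0 ≤ f' s) {s : ℝ} (hs : 0 ≤ s) :
    0 ≤ f s := by
  have hmono : MonotoneOn f (Set.Ici 0) :=
    monotoneOn_of_hasDerivWithinAt_nonneg (convex_Ici 0)
      (fun x _ => (hf x).continuousAt.continuousWithinAt)
      (fun x _ => (hf x).hasDerivWithinAt)
      (fun x hx => hf' x (interior_subset hx))
  simpa [h₀] using hmono (Set.mem_Ici.2 le_rfl) hs hs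

lemma cube_div_six_le_exp_sub {s : ℝ} (hs : 0 ≤ s) : s ^ 3 / 6 ≤ exp s - 1 - s - s ^ 2 / 2 := by
  have h := sum_le_exp_of_nonneg hs 4
  norm_num [Finset.sum_range_succ, Nat.factorial] at h
  linarith

lemma sub_two_mul_exp_add_nonneg {s : ℝ} (hs : 0 ≤ s) : 0 ≤ (s - 2) * exp s + s + 2 := by
  refine nonneg_of_hasDerivAt_of_nonneg (f := fun s => (s - 2) * exp s + s + 2)
    (f' := fun s => (s - 1) * exp s + 1) (by simp) (fun s => ?_) (fun s _ => ?_) hs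
  · exact ((((hasDerivAt_id s).sub_const 2).mul (hasDerivAt_exp s)).add
      (hasDerivAt_id s)).add_const 2 |>.congr_deriv (by simp; ring)
  · have h := add_one_le_exp (-s)
    rw [exp_neg] at h
    have := exp_pos s
    field_simp at h
    nlinarith

lemma mul_exp_sub_one_le_exp_mul_sub_one {c s : ℝ} (hc : 1 ≤ c) (hs : 0 ≤ s) :
    c * (exp s - 1) ≤ exp (c * s) - 1 := by
  have h := nonneg_of_hasDerivAt_of_nonneg
    (f := fun s => exp (c * s) - 1 - c * (exp s - 1))
    (f' := fun s => c * (exp (c * s) - exp s)) (by simp)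
    (fun s => (((hasDerivAt_id s).const_mul c).exp.sub_const 1).sub
      (((hasDerivAt_exp s).sub_const 1).const_mul c) |>.congr_deriv (by simp; ring))
    (fun s hs => mul_nonneg (by linarith) (sub_nonneg.2 (exp_le_exp.2 (by nlinarith)))) hs
  linarith

lemma sq_mul_exp_sub_le {c s : ℝ} (hc : 1 ≤ c) (hs : 0 ≤ s) :
    c ^ 2 * (exp s - 1 - s) ≤ exp (c * s) - 1 - c * s := by
  have h := nonneg_of_hasDerivAt_of_nonneg
    (f := fun s => exp (c * s) - 1 - c * s - c ^ 2 * (exp s - 1 - s))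
    (f' := fun s => c * ((exp (c * s) - 1) - c * (exp s - 1))) (by simp)
    (fun s => ((((hasDerivAt_id s).const_mul c).exp.sub_const 1).sub
      ((hasDerivAt_id s).const_mul c)).sub
      ((((hasDerivAt_exp s).sub_const 1).sub (hasDerivAt_id s)).const_mul (c ^ 2))
      |>.congr_deriv (by simp; ring))
    (fun s hs => mul_nonneg (by linarith)
      (sub_nonneg.2 (mul_exp_sub_one_le_exp_mul_sub_one hc hs))) hs
  linarith

lemma mul_exp_sub_one_le_exp_two_mul_sub_one {s : ℝ} (hs : 0 ≤ s) :
    s * (exp s - 1) ≤ exp (2 * s) - 1 := by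
  have h₁ : s ≤ exp s - 1 := by linarith [add_one_le_exp s]
  have h₂ : 1 ≤ exp s := one_le_exp hs
  rw [two_mul, exp_add]
  nlinarith

end Real

def Gmu (μ : ℝ) (z : ℂ) : ℝ := nlDensity μ z - 2 * Fmu μ z

section Pointwise

variable {μ : ℝ}

lemma Fmu_eq (μ : ℝ) (z : ℂ) :
    Fmu μ z = (exp (4 * π * ‖z‖ ^ 2) - 1 - 4 * π * ‖z‖ ^ 2 - μ * (4 * π * ‖z‖ ^ 2) ^ 2 / 2)
      / (8 * π) := by
  rw [Fmu]; ring

lemma Gmu_eq (μ : ℝ) (z : ℂ) :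
    Gmu μ z = ((4 * π * ‖z‖ ^ 2 - 1) * exp (4 * π * ‖z‖ ^ 2) + 1 - μ * (4 * π * ‖z‖ ^ 2) ^ 2 / 2)
      / (4 * π) := by
  rw [Gmu, nlDensity, Fmu]; field_simp; ring

lemma continuous_Fmu (μ : ℝ) : Continuous (Fmu μ) := by
  unfold Fmu; fun_prop

lemma continuous_Gmu (μ : ℝ) : Continuous (Gmu μ) := by
  unfold Gmu nlDensity Fmu; fun_prop

lemma Fmu_pos (hμ : μ ≤ 1) {z : ℂ} (hz : z ≠ 0) : 0 < Fmu μ z := by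
  rw [Fmu_eq]
  have hs : 0 < 4 * π * ‖z‖ ^ 2 := by positivity
  set s := 4 * π * ‖z‖ ^ 2
  have := Real.cube_div_six_le_exp_sub hs.le
  have : μ * s ^ 2 / 2 ≤ s ^ 2 / 2 := by gcongr; nlinarith
  apply div_pos _ (by positivity)
  nlinarith [pow_pos hs 3]

lemma Fmu_nonneg (hμ : μ ≤ 1) (z : ℂ) : 0 ≤ Fmu μ z := by
  rcases eq_or_ne z 0 with rfl | hz
  · simp [Fmu]
  · exact (Fmu_pos hμ hz).le

lemma Fmu_le (hμ : 0 ≤ μ) (z : ℂ) : Fmu μ z ≤ (exp (4 * π * ‖z‖ ^ 2) - 1) / (8 * π) := by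
  rw [Fmu_eq]
  apply div_le_div_of_nonneg_right _ (by positivity)
  have : 0 ≤ 4 * π * ‖z‖ ^ 2 := by positivity
  nlinarith [mul_nonneg hμ (sq_nonneg (4 * π * ‖z‖ ^ 2))]

lemma two_mul_Fmu_le_Gmu (μ : ℝ) (z : ℂ) : 2 * Fmu μ z ≤ Gmu μ z := by
  have h := Real.sub_two_mul_exp_add_nonneg (by positivity : 0 ≤ 4 * π * ‖z‖ ^ 2)
  have hdiff : Gmu μ z - 2 * Fmu μ z
      = ((4 * π * ‖z‖ ^ 2 - 2) * exp (4 * π * ‖z‖ ^ 2) + 4 * π * ‖z‖ ^ 2 + 2) / (4 * π) := by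
    rw [Fmu_eq, Gmu_eq]; field_simp; ring
  linarith [div_nonneg h (by positivity : 0 ≤ 4 * π)]

lemma Gmu_nonneg (hμ : μ ≤ 1) (z : ℂ) : 0 ≤ Gmu μ z := by
  linarith [Fmu_nonneg hμ z, two_mul_Fmu_le_Gmu μ z]

lemma Gmu_le (hμ₀ : 0 ≤ μ) (hμ₁ : μ ≤ 1) (z : ℂ) :
    Gmu μ z ≤ (exp (8 * π * ‖z‖ ^ 2) - 1) / (4 * π) := by
  have hs : 0 ≤ 4 * π * ‖z‖ ^ 2 := by positivity
  have hnl : nlDensity μ z ≤ (exp (8 * π * ‖z‖ ^ 2) - 1) / (4 * π) := by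
    have h := Real.mul_exp_sub_one_le_exp_two_mul_sub_one hs
    rw [nlDensity, le_div_iff₀ (by positivity)]
    rw [show 8 * π * ‖z‖ ^ 2 = 2 * (4 * π * ‖z‖ ^ 2) by ring]
    nlinarith [mul_nonneg hμ₀ hs, Real.add_one_le_exp (4 * π * ‖z‖ ^ 2)]
  linarith [Fmu_nonneg hμ₁ z, show Gmu μ z = nlDensity μ z - 2 * Fmu μ z from rfl]

lemma pow_four_mul_Fmu_le_Fmu_smul (μ : ℝ) {c : ℝ} (hc : 1 ≤ c) (z : ℂ) :
    c ^ 4 * Fmu μ z ≤ Fmu μ (c • z) := by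
  have hs : 0 ≤ 4 * π * ‖z‖ ^ 2 := by positivity
  have h := Real.sq_mul_exp_sub_le (one_le_pow₀ hc : 1 ≤ c ^ 2) hs
  have hcz : 4 * π * ‖c • z‖ ^ 2 = c ^ 2 * (4 * π * ‖z‖ ^ 2) := by
    rw [norm_smul, Real.norm_eq_abs, mul_pow, sq_abs]; ring
  rw [Fmu_eq, Fmu_eq, hcz, ← mul_div_assoc]
  gcongr
  nlinarith

end Pointwise

lemma integral_comp_pos_of_not_ae_eq_zero {α β : Type*} [MeasurableSpace α] {ν : Measure α}
    [Zero β] {u : α → β} {g : β → ℝ} (hg₀ : ∀ z, 0 ≤ g z) (hg : ∀ z, z ≠ 0 → 0 < g z)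
    (hint : Integrable (fun x => g (u x)) ν) (hu : ¬ u =ᵐ[ν] 0) : 0 < ∫ x, g (u x) ∂ν := by
  rw [integral_pos_iff_support_of_nonneg (fun x => hg₀ _) hint, pos_iff_ne_zero]
  intro h
  refine hu (ae_iff.2 (measure_mono_null (fun x hx => ?_) h))
  exact (hg _ hx).ne'

section Integrals

variable {μ : ℝ} {u : E2 → ℂ}

lemma l2Sq_nonneg (u : E2 → ℂ) : 0 ≤ l2Sq u :=
  integral_nonneg fun _ => sq_nonneg _

lemma gradSq_nonneg (u : E2 → ℂ) : 0 ≤ gradSq u :=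
  integral_nonneg fun _ => sq_nonneg _

lemma Smu_eq_gradSq_add_Pmu (μ : ℝ) (u : E2 → ℂ) : Smu μ u = gradSq u / 2 + Pmu μ u := by
  rw [Smu, Emu, Pmu]; ring

lemma Imu_eq (μ : ℝ) (u : E2 → ℂ) : Imu μ u = gradSq u - ∫ x, Gmu μ (u x) := rfl

lemma l2Sq_pos (hu : MemLp u 2 volume) (hne : ¬ u =ᵐ[volume] 0) : 0 < l2Sq u :=
  integral_comp_pos_of_not_ae_eq_zero (g := fun z => ‖z‖ ^ 2) (fun z => by positivity)
    (fun z hz => by positivity) ((memLp_two_iff_integrable_sq_norm hu.1).1 hu) hne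

lemma integrable_Fmu (hμ₀ : 0 ≤ μ) (hμ₁ : μ ≤ 1) (hu : AEStronglyMeasurable u volume)
    (he : ExpIntegrable u) : Integrable (fun x => Fmu μ (u x)) := by
  refine ((he (4 * π) (by positivity)).div_const (8 * π)).mono'
    ((continuous_Fmu μ).comp_aestronglyMeasurable hu) (Eventually.of_forall fun x => ?_)
  rw [Real.norm_eq_abs, abs_of_nonneg (Fmu_nonneg hμ₁ _)]
  exact Fmu_le hμ₀ _

lemma integrable_Gmu (hμ₀ : 0 ≤ μ) (hμ₁ : μ ≤ 1) (hu : AEStronglyMeasurable u volume)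
    (he : ExpIntegrable u) : Integrable (fun x => Gmu μ (u x)) := by
  refine ((he (8 * π) (by positivity)).div_const (4 * π)).mono'
    ((continuous_Gmu μ).comp_aestronglyMeasurable hu) (Eventually.of_forall fun x => ?_)
  rw [Real.norm_eq_abs, abs_of_nonneg (Gmu_nonneg hμ₁ _)]
  exact Gmu_le hμ₀ hμ₁ _

lemma integral_Fmu_pos (hμ₀ : 0 ≤ μ) (hμ₁ : μ ≤ 1) (hu : AEStronglyMeasurable u volume)
    (he : ExpIntegrable u) (hne : ¬ u =ᵐ[volume] 0) : 0 < ∫ x, Fmu μ (u x) :=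
  integral_comp_pos_of_not_ae_eq_zero (Fmu_nonneg hμ₁) (fun _ => Fmu_pos hμ₁)
    (integrable_Fmu hμ₀ hμ₁ hu he) hne

lemma two_mul_integral_Fmu_le_integral_Gmu (hμ₀ : 0 ≤ μ) (hμ₁ : μ ≤ 1)
    (hu : AEStronglyMeasurable u volume) (he : ExpIntegrable u) :
    2 * ∫ x, Fmu μ (u x) ≤ ∫ x, Gmu μ (u x) := by
  rw [← integral_const_mul]
  exact integral_mono ((integrable_Fmu hμ₀ hμ₁ hu he).const_mul 2)
    (integrable_Gmu hμ₀ hμ₁ hu he) fun x => two_mul_Fmu_le_Gmu μ (u x)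

end Integrals

section ConstSMul

variable {μ : ℝ} {u : E2 → ℂ}

lemma l2Sq_const_smul (c : ℝ) (u : E2 → ℂ) : l2Sq (c • u) = c ^ 2 * l2Sq u := by
  simp only [l2Sq, Pi.smul_apply, norm_smul, Real.norm_eq_abs, mul_pow, sq_abs]
  exact integral_const_mul _ _

lemma gradSq_const_smul (hu : Differentiable ℝ u) (c : ℝ) : gradSq (c • u) = c ^ 2 * gradSq u := by
  simp only [gradSq, fderiv_const_smul (hu _), norm_smul, Real.norm_eq_abs, mul_pow, sq_abs]
  exact integral_const_mul _ _

lemma MemH1.const_smul (hu : MemH1 u) (c : ℝ) : MemH1 (c • u) := by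
  obtain ⟨h2, hd, hD⟩ := hu
  refine ⟨h2.const_smul c, hd.const_smul c, ?_⟩
  simp only [fderiv_const_smul (hd _)]
  exact hD.const_smul c

lemma ExpIntegrable.const_smul (he : ExpIntegrable u) (c : ℝ) : ExpIntegrable (c • u) := by
  intro a ha
  rcases eq_or_ne c 0 with rfl | hc
  · simp
  · simpa [norm_smul, mul_pow, ← mul_assoc] using he (a * c ^ 2) (by positivity)

lemma not_ae_eq_zero_const_smul (hne : ¬ u =ᵐ[volume] 0) {c : ℝ} (hc : c ≠ 0) :
    ¬ c • u =ᵐ[volume] 0 :=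
  fun h => hne (h.mono fun x hx => by simpa [hc] using hx)

lemma continuousOn_integral_Fmu_const_smul (hμ₀ : 0 ≤ μ) (hμ₁ : μ ≤ 1)
    (hu : AEStronglyMeasurable u volume) (he : ExpIntegrable u) (L : ℝ) :
    ContinuousOn (fun c : ℝ => ∫ x, Fmu μ (c • u x)) (Set.Icc (-L) L) := by
  refine continuousOn_of_dominated
    (bound := fun x => (exp (4 * π * (1 + L ^ 2) * ‖u x‖ ^ 2) - 1) / (8 * π))
    (fun c _ => (continuous_Fmu μ).comp_aestronglyMeasurable (hu.const_smul c))
    (fun c hc => Eventually.of_forall fun x => ?_)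
    ((he _ (by positivity)).div_const _)
    (Eventually.of_forall fun x =>
      ((continuous_Fmu μ).comp (continuous_id.smul continuous_const)).continuousOn)
  rw [Real.norm_eq_abs, abs_of_nonneg (Fmu_nonneg hμ₁ _)]
  refine (Fmu_le hμ₀ _).trans ?_
  have hc2 : c ^ 2 ≤ 1 + L ^ 2 := by linarith [sq_le_sq' hc.1 hc.2]
  have harg : 4 * π * ‖c • u x‖ ^ 2 ≤ 4 * π * (1 + L ^ 2) * ‖u x‖ ^ 2 := by
    rw [norm_smul, Real.norm_eq_abs, mul_pow, sq_abs, mul_assoc (4 * π)]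
    gcongr
  gcongr

lemma exists_one_le_Pmu_const_smul_eq_zero (hμ₀ : 0 ≤ μ) (hμ₁ : μ ≤ 1) (hu : MemH1 u)
    (he : ExpIntegrable u) (hne : ¬ u =ᵐ[volume] 0) (hP : 0 < Pmu μ u) :
    ∃ c : ℝ, 1 ≤ c ∧ Pmu μ (c • u) = 0 := by
  have hm := hu.1.aestronglyMeasurable
  set A := ∫ x, Fmu μ (u x)
  have hA : 0 < A := integral_Fmu_pos hμ₀ hμ₁ hm he hne
  have hl := l2Sq_nonneg u
  have hPc : ∀ c : ℝ, Pmu μ (c • u) = c ^ 2 * l2Sq u / 2 - ∫ x, Fmu μ (c • u x) := fun c => by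
    rw [Pmu, l2Sq_const_smul]; rfl
  -- at `L`, the superquadratic growth of `F_μ` beats the quadratic mass term
  set L := 1 + l2Sq u / A
  have hL : 1 ≤ L := le_add_of_nonneg_right (div_nonneg hl hA.le)
  have hLA : L * A = A + l2Sq u := by rw [add_mul, div_mul_cancel₀ _ hA.ne', one_mul]
  have hPL : Pmu μ (L • u) < 0 := by
    have hgrowth : L ^ 4 * A ≤ ∫ x, Fmu μ (L • u x) := by
      rw [← integral_const_mul]
      exact integral_mono ((integrable_Fmu hμ₀ hμ₁ hm he).const_mul _)
        (integrable_Fmu hμ₀ hμ₁ (hm.const_smul L) (he.const_smul L))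
        fun x => pow_four_mul_Fmu_le_Fmu_smul μ hL (u x)
    rw [hPc]
    nlinarith [mul_le_mul_of_nonneg_left (le_mul_of_one_le_left hA.le hL) (by positivity : 0 ≤ L ^ 2)]
  have hcont : ContinuousOn (fun c : ℝ => Pmu μ (c • u)) (Set.Icc 1 L) := by
    simp only [hPc]
    exact ContinuousOn.sub (by fun_prop)
      ((continuousOn_integral_Fmu_const_smul hμ₀ hμ₁ hm he L).mono
        (Set.Icc_subset_Icc (by linarith : -L ≤ 1) le_rfl))
  obtain ⟨c, hc, hc0⟩ := intermediate_value_Icc' hL hcont ⟨hPL.le, by simpa using hP.le⟩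
  exact ⟨c, hc.1, hc0⟩

end ConstSMul

section Dilation

variable {E F : Type*} [NormedAddCommGroup E] [NormedSpace ℝ E] [MeasurableSpace E] [BorelSpace E]
  [FiniteDimensional ℝ E] {ν : Measure E} [ν.IsAddHaarMeasure]

lemma MemLp.comp_smul_two [NormedAddCommGroup F] {f : E → F} (hf : MemLp f 2 ν) {R : ℝ} (hR : R ≠ 0) :
    MemLp (fun x => f (R • x)) 2 ν := by
  have hm : AEStronglyMeasurable (fun x => f (R • x)) ν :=
    hf.1.comp_quasiMeasurePreserving (Measure.quasiMeasurePreserving_smul ν hR)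
  exact (memLp_two_iff_integrable_sq_norm hm).2
    (((memLp_two_iff_integrable_sq_norm hf.1).1 hf).comp_smul hR)

lemma not_ae_eq_zero_comp_smul [Zero F] {f : E → F} (hne : ¬ f =ᵐ[ν] 0) {R : ℝ} (hR : R ≠ 0) :
    ¬ (fun x => f (R • x)) =ᵐ[ν] 0 := by
  intro h
  refine hne ?_
  have := (Measure.quasiMeasurePreserving_smul ν (inv_ne_zero hR)).ae_eq_comp h
  simpa [Function.comp_def, smul_smul, hR, Pi.zero_def] using this

end Dilation

section DilationE2

variable {μ : ℝ} {u : E2 → ℂ}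

lemma integral_comp_smul_E2 {F : Type*} [NormedAddCommGroup F] [NormedSpace ℝ F] (f : E2 → F)
    (R : ℝ) : ∫ x, f (R • x) = (R ^ 2)⁻¹ • ∫ x, f x := by
  rw [Measure.integral_comp_smul, finrank_euclideanSpace_fin, abs_of_nonneg (by positivity)]

lemma l2Sq_comp_smul (u : E2 → ℂ) (R : ℝ) : l2Sq (fun x => u (R • x)) = (R ^ 2)⁻¹ * l2Sq u :=
  integral_comp_smul_E2 (fun y => ‖u y‖ ^ 2) R

lemma gradSq_comp_smul (u : E2 → ℂ) {R : ℝ} (hR : R ≠ 0) :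
    gradSq (fun x => u (R • x)) = gradSq u := by
  have h := integral_comp_smul_E2 (fun y => ‖fderiv ℝ u y‖ ^ 2) R
  simp only [smul_eq_mul] at h
  simp only [gradSq, fderiv_comp_smul, norm_smul, Real.norm_eq_abs, mul_pow, sq_abs]
  rw [integral_const_mul, h, ← mul_assoc, mul_inv_cancel₀ (pow_ne_zero 2 hR), one_mul]

lemma MemH1.comp_smul (hu : MemH1 u) {R : ℝ} (hR : R ≠ 0) : MemH1 (fun x => u (R • x)) := by
  obtain ⟨h2, hd, hD⟩ := hu
  refine ⟨MemLp.comp_smul_two h2 hR, hd.comp (differentiable_id.const_smul R), ?_⟩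
  simp only [fderiv_comp_smul]
  exact (MemLp.comp_smul_two hD hR).const_smul R

lemma ExpIntegrable.comp_smul (he : ExpIntegrable u) {R : ℝ} (hR : R ≠ 0) :
    ExpIntegrable (fun x => u (R • x)) :=
  fun a ha => (he a ha).comp_smul hR

lemma Pmu_comp_smul (μ : ℝ) (u : E2 → ℂ) (R : ℝ) :
    Pmu μ (fun x => u (R • x)) = (R ^ 2)⁻¹ * Pmu μ u := by
  have h := integral_comp_smul_E2 (fun y => Fmu μ (u y)) R
  simp only [smul_eq_mul] at h
  rw [Pmu, Pmu, l2Sq_comp_smul, h]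
  ring

lemma Imu_comp_smul (μ : ℝ) (u : E2 → ℂ) {R : ℝ} (hR : R ≠ 0) :
    Imu μ (fun x => u (R • x)) = gradSq u - (R ^ 2)⁻¹ * ∫ x, Gmu μ (u x) := by
  have h := integral_comp_smul_E2 (fun y => Gmu μ (u y)) R
  simp only [smul_eq_mul] at h
  rw [Imu_eq, gradSq_comp_smul u hR, h]

end DilationE2

def constrainedActions (μ : ℝ) (N : (E2 → ℂ) → ℝ) : Set ℝ :=
  {s | ∃ ψ : E2 → ℂ, MemH1 ψ ∧ ExpIntegrable ψ ∧ ¬ ψ =ᵐ[volume] (0 : E2 → ℂ) ∧ N ψ = 0 ∧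
    s = Smu μ ψ}

section Invariance

variable {μ SQ : ℝ} {u : E2 → ℂ}

lemma ne_zero_of_Smu_lt {N : (E2 → ℂ) → ℝ} (hlb : SQ ∈ lowerBounds (constrainedActions μ N))
    (hu : MemH1 u) (he : ExpIntegrable u) (hne : ¬ u =ᵐ[volume] 0) (hS : Smu μ u < SQ) :
    N u ≠ 0 :=
  fun h => hS.not_ge (hlb ⟨u, hu, he, hne, h, rfl⟩)

lemma pos_of_mem_constrainedActions_Imu (hμ₀ : 0 ≤ μ) (hμ₁ : μ ≤ 1) {s : ℝ}
    (hs : s ∈ constrainedActions μ (Imu μ)) : 0 < s := by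
  obtain ⟨ψ, hψ, he, hne, hI, rfl⟩ := hs
  have hFG := two_mul_integral_Fmu_le_integral_Gmu hμ₀ hμ₁ hψ.1.aestronglyMeasurable he
  have hl := l2Sq_pos hψ.1 hne
  rw [Imu_eq] at hI
  rw [Smu_eq_gradSq_add_Pmu, Pmu]
  linarith

lemma le_of_mem_lowerBounds_constrainedActions_Imu
    (hlb : SQ ∈ lowerBounds (constrainedActions μ (Imu μ))) (hu : MemH1 u) (he : ExpIntegrable u)
    (hne : ¬ u =ᵐ[volume] 0) (hg : 0 < gradSq u) (hC : 0 < ∫ x, Gmu μ (u x)) :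
    SQ ≤ gradSq u / 2 + gradSq u / (∫ x, Gmu μ (u x)) * Pmu μ u := by
  set C := ∫ x, Gmu μ (u x)
  set R := Real.sqrt (C / gradSq u)
  have hR : R ≠ 0 := (Real.sqrt_pos.2 (div_pos hC hg)).ne'
  have hR2 : (R ^ 2)⁻¹ = gradSq u / C := by
    rw [Real.sq_sqrt (div_pos hC hg).le, inv_div]
  have hI : Imu μ (fun x => u (R • x)) = 0 := by
    rw [Imu_comp_smul μ u hR, hR2, div_mul_cancel₀ _ hC.ne', sub_self]
  have h := hlb ⟨_, hu.comp_smul hR, he.comp_smul hR, not_ae_eq_zero_comp_smul hne hR, hI, rfl⟩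
  rwa [Smu_eq_gradSq_add_Pmu, gradSq_comp_smul u hR, Pmu_comp_smul, hR2] at h

lemma Imu_pos_of_Pmu_pos (hμ₀ : 0 ≤ μ) (hμ₁ : μ ≤ 1)
    (hPlb : SQ ∈ lowerBounds (constrainedActions μ (Pmu μ)))
    (hIleast : IsLeast (constrainedActions μ (Imu μ)) SQ) (hu : MemH1 u) (he : ExpIntegrable u)
    (hne : ¬ u =ᵐ[volume] 0) (hS : Smu μ u < SQ) (hP : 0 < Pmu μ u) : 0 < Imu μ u := by
  have hI0 := ne_zero_of_Smu_lt hIleast.2 hu he hne hS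
  by_contra hIu
  have hI' : Imu μ u < 0 := lt_of_le_of_ne (not_lt.1 hIu) hI0
  have hgC : gradSq u < ∫ x, Gmu μ (u x) := by rw [Imu_eq] at hI'; linarith
  rcases (gradSq_nonneg u).eq_or_lt with hg | hg
  · -- no dilation reaches `I_μ = 0`; the ray `c • u` reaches `P_μ = 0` at zero action
    obtain ⟨c, hc1, hc⟩ := exists_one_le_Pmu_const_smul_eq_zero hμ₀ hμ₁ hu he hne hP
    have hc0 : c ≠ 0 := (zero_lt_one.trans_le hc1).ne'
    have h := hPlb ⟨_, hu.const_smul c, he.const_smul c, not_ae_eq_zero_const_smul hne hc0, hc, rfl⟩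
    rw [Smu_eq_gradSq_add_Pmu, gradSq_const_smul hu.2.1, ← hg, hc] at h
    linarith [pos_of_mem_constrainedActions_Imu hμ₀ hμ₁ hIleast.1]
  · have h := le_of_mem_lowerBounds_constrainedActions_Imu hIleast.2 hu he hne hg (hg.trans hgC)
    have hratio : gradSq u / (∫ x, Gmu μ (u x)) < 1 := (div_lt_one (hg.trans hgC)).2 hgC
    rw [Smu_eq_gradSq_add_Pmu] at hS
    nlinarith

lemma Imu_neg_of_Pmu_neg (hμ₀ : 0 ≤ μ) (hμ₁ : μ ≤ 1)
    (hIlb : SQ ∈ lowerBounds (constrainedActions μ (Imu μ))) (hu : MemH1 u) (he : ExpIntegrable u)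
    (hne : ¬ u =ᵐ[volume] 0) (hS : Smu μ u < SQ) (hP : Pmu μ u < 0) : Imu μ u < 0 := by
  have hI0 := ne_zero_of_Smu_lt hIlb hu he hne hS
  by_contra hIu
  have hI' : 0 < Imu μ u := lt_of_le_of_ne (not_lt.1 hIu) hI0.symm
  have hgC : ∫ x, Gmu μ (u x) < gradSq u := by rw [Imu_eq] at hI'; linarith
  have hC : 0 < ∫ x, Gmu μ (u x) := by
    have hl := l2Sq_nonneg u
    have := two_mul_integral_Fmu_le_integral_Gmu hμ₀ hμ₁ hu.1.aestronglyMeasurable he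
    rw [Pmu] at hP
    linarith
  have h := le_of_mem_lowerBounds_constrainedActions_Imu hIlb hu he hne (hC.trans hgC) hC
  have hratio : 1 < gradSq u / (∫ x, Gmu μ (u x)) := (one_lt_div hC).2 hgC
  rw [Smu_eq_gradSq_add_Pmu] at hS
  nlinarith

end Invariance

lemma pos_iff_pos_and_neg_iff_neg_of_ne_zero {a b : ℝ} (ha : a ≠ 0) (hpos : 0 < a → 0 < b)
    (hneg : a < 0 → b < 0) : (0 < a ↔ 0 < b) ∧ (a < 0 ↔ b < 0) := by
  rcases ha.lt_or_gt with h | h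
  · have := hneg h
    exact ⟨⟨fun h' => by linarith, fun h' => by linarith⟩, ⟨fun _ => this, fun _ => h⟩⟩
  · have := hpos h
    exact ⟨⟨fun _ => this, fun _ => h⟩, ⟨fun h' => by linarith, fun h' => by linarith⟩⟩

theorem Aplus_eq_Kplus_general (μ : ℝ) (hμ : μ = 0 ∨ μ = 1)
    (Q : E2 → ℂ)
    (hPchar : IsLeast {s : ℝ | ∃ ψ : E2 → ℂ, MemH1 ψ ∧ ExpIntegrable ψ ∧
        ¬ ψ =ᵐ[volume] (0 : E2 → ℂ) ∧ Pmu μ ψ = 0 ∧ s = Smu μ ψ} (Smu μ Q))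
    (hIchar : IsLeast {s : ℝ | ∃ ψ : E2 → ℂ, MemH1 ψ ∧ ExpIntegrable ψ ∧
        ¬ ψ =ᵐ[volume] (0 : E2 → ℂ) ∧ Imu μ ψ = 0 ∧ s = Smu μ ψ} (Smu μ Q)) :
    ∀ φ : E2 → ℂ, MemH1 φ → ExpIntegrable φ → ¬ φ =ᵐ[volume] (0 : E2 → ℂ) →
      Smu μ φ < Smu μ Q →
        ((0 < Pmu μ φ ↔ 0 < Imu μ φ) ∧ (Pmu μ φ < 0 ↔ Imu μ φ < 0)) := by
  intro φ hφ he hne hS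
  have hμ₀ : 0 ≤ μ := by rcases hμ with rfl | rfl <;> norm_num
  have hμ₁ : μ ≤ 1 := by rcases hμ with rfl | rfl <;> norm_num
  exact pos_iff_pos_and_neg_iff_neg_of_ne_zero (ne_zero_of_Smu_lt hPchar.2 hφ he hne hS)
    (Imu_pos_of_Pmu_pos hμ₀ hμ₁ hPchar.2 hIchar hφ he hne hS)
    (Imu_neg_of_Pmu_neg hμ₀ hμ₁ hIchar.2 hφ he hne hS)

/-- equivalence of the invariant sets, `𝒜^±_μ = 𝒦^±_μ`: below the ground
state action level, `P_μ(φ) > 0 ↔ I_μ(φ) > 0` and `P_μ(φ) < 0 ↔ I_μ(φ) < 0`. -/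
theorem Aplus_eq_Kplus (μ : ℝ) (hμ : μ = 0 ∨ μ = 1)
    (Q : E2 → ℂ) (hQ : IsGroundState μ Q)
    (hPchar : IsLeast {s : ℝ | ∃ ψ : E2 → ℂ, MemH1 ψ ∧ ExpIntegrable ψ ∧
        ¬ ψ =ᵐ[volume] (0 : E2 → ℂ) ∧ Pmu μ ψ = 0 ∧ s = Smu μ ψ} (Smu μ Q))
    (hIchar : IsLeast {s : ℝ | ∃ ψ : E2 → ℂ, MemH1 ψ ∧ ExpIntegrable ψ ∧
        ¬ ψ =ᵐ[volume] (0 : E2 → ℂ) ∧ Imu μ ψ = 0 ∧ s = Smu μ ψ} (Smu μ Q)) :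
    ∀ φ : E2 → ℂ, MemH1 φ → ExpIntegrable φ → ¬ φ =ᵐ[volume] (0 : E2 → ℂ) →
      Smu μ φ < Smu μ Q →
        ((0 < Pmu μ φ ↔ 0 < Imu μ φ) ∧ (Pmu μ φ < 0 ↔ Imu μ φ < 0)) :=
  Aplus_eq_Kplus_general μ hμ Q hPchar hIchar
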